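/- arXiv:2602.18362 — 2 statements merged into one kernel-verified Lean document; each statement's English description precedes it below -/
import Mathlib

section
/- Let G be a finite simple graph that is C_3-free, C_5-free and C_6-free, let x be a vertex and y ∈ N(x). Then for a set R of vertices, the following are equivalent: (a) R is a minimal redundant set of G with red(R) = {x} and N(x) ∩ R = {y}; (b) R = S ∪ {x, y} where (i) S ⊆ N²(x), (ii) y has a private neighbor with respect to S ∪ {x}, (iii) every z ∈ S with N(z) ⊆ N(x) satisfies z ∉ N(y), and (iv) S minimally dominates N(x) \ {y}. -/
open Set SimpleGraph

variable {V : Type*}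

/-- The closed neighborhood `N[v]` of a vertex. -/
def closedNbr (G : SimpleGraph V) (v : V) : Set V := insert v (G.neighborSet v)

/-- Private neighbors of `x` with respect to `I`. -/
def privSet (G : SimpleGraph V) (x : V) (I : Set V) : Set V :=
  {y ∈ closedNbr G x | closedNbr G y ∩ I = {x}}

/-- A set is irredundant if every element has a private neighbor. -/
def Irred (G : SimpleGraph V) (I : Set V) : Prop := ∀ x ∈ I, (privSet G x I).Nonempty

/-- A maximal irredundant set. -/
def MaxIrred (G : SimpleGraph V) (I : Set V) : Prop :=
  Irred G I ∧ ∀ J : Set V, Irred G J → I ⊆ J → J = I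

def Redundant (G : SimpleGraph V) (R : Set V) : Prop := ¬ Irred G R

def MinRedundant (G : SimpleGraph V) (R : Set V) : Prop :=
  Redundant G R ∧ ∀ S : Set V, S ⊂ R → ¬ Redundant G S

/-- The set of redundant vertices of a set. -/
def redVerts (G : SimpleGraph V) (R : Set V) : Set V := {x ∈ R | privSet G x R = ∅}

def Dominating (G : SimpleGraph V) (D : Set V) : Prop := ∀ v : V, ∃ d ∈ D, v ∈ closedNbr G d

def MinDominating (G : SimpleGraph V) (D : Set V) : Prop :=
  Dominating G D ∧ ∀ S : Set V, S ⊂ D → ¬ Dominating G S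

/-- Vertices at distance at most 2 from `x`. -/
def ball2 (G : SimpleGraph V) (x : V) : Set V :=
  {y | y = x ∨ G.Adj x y ∨ ∃ w, G.Adj x w ∧ G.Adj w y}

/-- Vertices at distance exactly 2 from `x`. -/
def sphere2 (G : SimpleGraph V) (x : V) : Set V :=
  {y | y ≠ x ∧ ¬ G.Adj x y ∧ ∃ w, G.Adj x w ∧ G.Adj w y}

/-- `G` contains no induced cycle of length `k`. -/
def CFree (G : SimpleGraph V) (k : ℕ) : Prop :=
  IsEmpty (SimpleGraph.cycleGraph k ↪g G)

/-- `S` dominates `B` through open neighborhoods. -/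
def DomOver (G : SimpleGraph V) (S B : Set V) : Prop := ∀ b ∈ B, ∃ s ∈ S, G.Adj s b

def MinDomOver (G : SimpleGraph V) (S B : Set V) : Prop :=
  DomOver G S B ∧ ∀ S' : Set V, S' ⊂ S → ¬ DomOver G S' B

/-- `N(Y)`, the union of open neighborhoods of elements of `Y`. -/
def nbrUnion (G : SimpleGraph V) (Y : Set V) : Set V := ⋃ y ∈ Y, G.neighborSet y

/-- Private edges of `x` with respect to `I` in a hypergraph. -/
def hypPriv (H : Set (Set V)) (x : V) (I : Set V) : Set (Set V) := {E ∈ H | E ∩ I = {x}}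

def HypIrred (H : Set (Set V)) (I : Set V) : Prop := ∀ x ∈ I, (hypPriv H x I).Nonempty

def HypMaxIrred (H : Set (Set V)) (I : Set V) : Prop :=
  HypIrred H I ∧ ∀ J : Set V, HypIrred H J → I ⊆ J → J = I

/-- The trace of a hypergraph on a set `S`. -/
def htrace (H : Set (Set V)) (S : Set V) : Set (Set V) :=
  {F | ∃ E ∈ H, F = E ∩ S ∧ (E ∩ S).Nonempty}

/-- The closed-neighborhood hypergraph of a graph. -/
def nbrHyp (G : SimpleGraph V) : Set (Set V) := Set.range (closedNbr G)

/-- The first `i` vertices in the ordering `v` (zero-based: `v 0, …, v (i-1)`). -/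
def firstVerts (v : ℕ → V) (i : ℕ) : Set V := {x | ∃ j < i, v j = x}

/-- The incidence co-bipartite graph of the closed-neighborhood hypergraph of `G`:
`Sum.inl` is the vertex side `V`, `Sum.inr` is the copy `U`. -/
def cobip (G : SimpleGraph V) : SimpleGraph (V ⊕ V) :=
  SimpleGraph.fromRel (fun a b => match a, b with
    | Sum.inl _, Sum.inl _ => True
    | Sum.inr _, Sum.inr _ => True
    | Sum.inl a, Sum.inr b => a = b ∨ G.Adj a b
    | Sum.inr _, Sum.inl _ => False)


section Aux

variable {G : SimpleGraph V}

lemma mem_closedNbr {u v : V} : u ∈ closedNbr G v ↔ u = v ∨ G.Adj v u := by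
  simp [closedNbr]

lemma closedNbr_comm {u v : V} : u ∈ closedNbr G v ↔ v ∈ closedNbr G u := by
  simp [mem_closedNbr, eq_comm, G.adj_comm]

lemma mem_privSet' {a u : V} {I : Set V} :
    u ∈ privSet G a I ↔ u ∈ closedNbr G a ∧ closedNbr G u ∩ I = {a} := Iff.rfl

lemma privSet_char {a u : V} {I : Set V} (ha : a ∈ I) (hu : u ∈ closedNbr G a) :
    u ∈ privSet G a I ↔ ∀ b ∈ I, b ∈ closedNbr G u → b = a := by
  rw [mem_privSet']
  constructor
  · rintro ⟨-, h⟩ b hbI hbu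
    have hb : b ∈ closedNbr G u ∩ I := ⟨hbu, hbI⟩
    rw [h] at hb; exact hb
  · intro h
    refine ⟨hu, Set.Subset.antisymm (fun b hb => h b hb.2 hb.1) ?_⟩
    intro b hb0
    have hbe : b = a := hb0
    rw [hbe]
    exact ⟨closedNbr_comm.mp hu, ha⟩

lemma privSet_mono {a : V} {T I : Set V} (hT : T ⊆ I) (ha : a ∈ T) :
    privSet G a I ⊆ privSet G a T := by
  rintro u ⟨h1, h2⟩
  refine ⟨h1, Set.Subset.antisymm ?_ ?_⟩
  · intro b hb
    rw [← h2]; exact ⟨hb.1, hT hb.2⟩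
  · intro b hb0
    have hbe : b = a := hb0
    rw [hbe]
    have hb : a ∈ closedNbr G u ∩ I := by rw [h2]; rfl
    exact ⟨hb.1, ha⟩

lemma priv_empty_of {x : V} {T : Set V}
    (h : ∀ u ∈ closedNbr G x, ∃ b ∈ T, b ∈ closedNbr G u ∧ b ≠ x) :
    privSet G x T = ∅ := by
  ext u
  simp only [Set.mem_empty_iff_false, iff_false]
  rintro ⟨h1, h2⟩
  obtain ⟨b, hbT, hbu, hbx⟩ := h u h1
  exact hbx (by rw [← Set.mem_singleton_iff, ← h2]; exact ⟨hbu, hbT⟩)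

lemma exists_other {A : Set V} {x : V} (hx : x ∈ A) (hne : A ≠ {x}) :
    ∃ b ∈ A, b ≠ x := by
  by_contra h
  push_neg at h
  exact hne (Set.Subset.antisymm (fun b hb => h b hb) (by simpa using hx))

lemma diff_ssub {S : Set V} {z : V} (hz : z ∈ S) : S \ {z} ⊂ S :=
  ⟨Set.diff_subset, fun h => (h hz).2 rfl⟩

end Aux

lemma noC3 {G : SimpleGraph V} (h3 : CFree G 3) {a b c : V}
    (hab : G.Adj a b) (hbc : G.Adj b c) (hac : G.Adj a c) : False := by
  have hinj : Function.Injective ![a,b,c] := by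
    intro i j hij
    fin_cases i <;> fin_cases j <;> simp_all
  exact h3.elim ⟨⟨![a,b,c], hinj⟩, by
    intro i j
    fin_cases i <;> fin_cases j <;>
      simp_all [cycleGraph_adj', G.adj_comm, G.irrefl] <;> decide⟩

lemma noC5 {G : SimpleGraph V} (h5 : CFree G 5) {a b c d e : V}
    (hab : G.Adj a b) (hbc : G.Adj b c) (hcd : G.Adj c d) (hde : G.Adj d e)
    (hea : G.Adj e a)
    (hac : ¬ G.Adj a c) (had : ¬ G.Adj a d) (hbd : ¬ G.Adj b d)
    (hbe : ¬ G.Adj b e) (hce : ¬ G.Adj c e) : False := by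
  have hba := hab.symm; have hcb := hbc.symm; have hdc := hcd.symm
  have hed := hde.symm; have hae := hea.symm
  have hca : ¬ G.Adj c a := fun h => hac h.symm
  have hda : ¬ G.Adj d a := fun h => had h.symm
  have hdb : ¬ G.Adj d b := fun h => hbd h.symm
  have heb : ¬ G.Adj e b := fun h => hbe h.symm
  have hec : ¬ G.Adj e c := fun h => hce h.symm
  have hinj : Function.Injective ![a,b,c,d,e] := by
    intro i j hij
    fin_cases i <;> fin_cases j <;> simp_all
  exact h5.elim ⟨⟨![a,b,c,d,e], hinj⟩, by
    intro i j
    fin_cases i <;> fin_cases j <;>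
      simp_all [cycleGraph_adj'] <;> decide⟩

lemma noC6 {G : SimpleGraph V} (h6 : CFree G 6) {a b c d e f : V}
    (hab : G.Adj a b) (hbc : G.Adj b c) (hcd : G.Adj c d) (hde : G.Adj d e)
    (hef : G.Adj e f) (hfa : G.Adj f a)
    (hac : ¬ G.Adj a c) (had : ¬ G.Adj a d) (hae : ¬ G.Adj a e)
    (hbd : ¬ G.Adj b d) (hbe : ¬ G.Adj b e) (hbf : ¬ G.Adj b f)
    (hce : ¬ G.Adj c e) (hcf : ¬ G.Adj c f) (hdf : ¬ G.Adj d f) : False := by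
  have hba := hab.symm; have hcb := hbc.symm; have hdc := hcd.symm
  have hed := hde.symm; have hfe := hef.symm; have haf := hfa.symm
  have hca : ¬ G.Adj c a := fun h => hac h.symm
  have hda : ¬ G.Adj d a := fun h => had h.symm
  have hea : ¬ G.Adj e a := fun h => hae h.symm
  have hdb : ¬ G.Adj d b := fun h => hbd h.symm
  have heb : ¬ G.Adj e b := fun h => hbe h.symm
  have hfb : ¬ G.Adj f b := fun h => hbf h.symm
  have hec : ¬ G.Adj e c := fun h => hce h.symm
  have hfc : ¬ G.Adj f c := fun h => hcf h.symm
  have hfd : ¬ G.Adj f d := fun h => hdf h.symm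
  have hv5 : (![a,b,c,d,e,f] : Fin 6 → V) 5 = f := rfl
  have hinj : Function.Injective ![a,b,c,d,e,f] := by
    intro i j hij
    fin_cases i <;> fin_cases j <;> simp_all [hv5]
  exact h6.elim ⟨⟨![a,b,c,d,e,f], hinj⟩, by
    intro i j
    fin_cases i <;> fin_cases j <;>
      simp_all [hv5, cycleGraph_adj'] <;> decide⟩

/-- characterization of minimal redundant sets with a single redundant
vertex `x` and a unique neighbor `y` of `x`, in `(C₃, C₅, C₆)`-free graphs. -/
theorem stmt16 [Fintype V] (G : SimpleGraph V) (h3 : CFree G 3) (h5 : CFree G 5)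
    (h6 : CFree G 6) (x y : V) (hy : y ∈ G.neighborSet x) (R : Set V) :
    (MinRedundant G R ∧ redVerts G R = {x} ∧ G.neighborSet x ∩ R = {y}) ↔
    (∃ S : Set V, R = S ∪ {x, y} ∧
      S ⊆ sphere2 G x ∧
      (privSet G y (S ∪ {x, y})).Nonempty ∧
      (∀ z ∈ S, G.neighborSet z ⊆ G.neighborSet x → z ∉ G.neighborSet y) ∧
      MinDomOver G S (G.neighborSet x \ {y})) := by
  have hxy : G.Adj x y := hy
  have hxney : x ≠ y := hxy.ne
  constructor
  · -- forward direction
    rintro ⟨⟨hredR, hmin⟩, hredv, hnx⟩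
    have hxRv : x ∈ redVerts G R := by rw [hredv]; rfl
    have hxR : x ∈ R := hxRv.1
    have hprivx : privSet G x R = ∅ := hxRv.2
    have hyR : y ∈ R := by
      have h0 : (y : V) ∈ ({y} : Set V) := rfl
      rw [← hnx] at h0
      exact h0.2
    have hmemNx : ∀ v, G.Adj x v → v ∈ R → v = y := by
      intro v hv hvR
      have : v ∈ G.neighborSet x ∩ R := ⟨hv, hvR⟩
      rw [hnx] at this
      exact this
    have hprivother : ∀ v ∈ R, v ≠ x → (privSet G v R).Nonempty := by
      intro v hvR hvx
      rcases Set.eq_empty_or_nonempty (privSet G v R) with h | h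
      · exact absurd (show v ∈ redVerts G R from ⟨hvR, h⟩) (by rw [hredv]; simpa using hvx)
      · exact h
    refine ⟨R \ ({x, y} : Set V), ?_, ?_, ?_, ?_, ?_, ?_⟩
    · -- R = (R \ {x,y}) ∪ {x,y}
      ext v
      constructor
      · intro hvR
        by_cases hv : v ∈ ({x, y} : Set V)
        · exact Or.inr hv
        · exact Or.inl ⟨hvR, hv⟩
      · rintro (h | h)
        · exact h.1
        · rcases h with h | h
          · rw [h]; exact hxR
          · rw [Set.mem_singleton_iff] at h; rw [h]; exact hyR
    · -- S ⊆ sphere2 G x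
      intro z hz
      have hzR := hz.1
      have hzx : z ≠ x := fun h => hz.2 (by simp [h])
      have hzy : z ≠ y := fun h => hz.2 (by simp [h])
      have hznadj : ¬ G.Adj x z := fun h => hzy (hmemNx z h hzR)
      have hsub : R \ ({z} : Set V) ⊂ R := diff_ssub hzR
      have hirr : Irred G (R \ {z}) := not_not.mp (hmin _ hsub)
      obtain ⟨w, hw1, hw2⟩ := hirr x ⟨hxR, fun h => hzx ((Set.mem_singleton_iff.mp h).symm)⟩
      have hzw : z ∈ closedNbr G w := by
        by_contra hzcw
        have hcl : closedNbr G w ∩ R = {x} := by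
          ext b
          constructor
          · intro hb
            have hbz : b ∉ ({z} : Set V) := fun h => hzcw ((Set.mem_singleton_iff.mp h) ▸ hb.1)
            have : b ∈ closedNbr G w ∩ (R \ {z}) := ⟨hb.1, hb.2, hbz⟩
            rw [hw2] at this; exact this
          · intro hb
            rw [← hw2] at hb
            exact ⟨hb.1, hb.2.1⟩
        have : w ∈ privSet G x R := ⟨hw1, hcl⟩
        rw [hprivx] at this
        exact this
      have hwx : G.Adj x w := by
        rcases mem_closedNbr.mp hw1 with h | h
        · exfalso
          subst h
          rcases mem_closedNbr.mp hzw with h' | h'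
          · exact hzx h'
          · exact hznadj h'
        · exact h
      have hwadj : G.Adj w z := by
        rcases mem_closedNbr.mp hzw with h | h
        · subst h; exact absurd hwx hznadj
        · exact h
      exact ⟨hzx, hznadj, w, hwx, hwadj⟩
    · -- priv y nonempty
      have hR : R \ ({x, y} : Set V) ∪ ({x, y} : Set V) = R := by
        ext v
        constructor
        · rintro (h | h)
          · exact h.1
          · rcases h with h | h
            · rw [h]; exact hxR
            · rw [Set.mem_singleton_iff] at h; rw [h]; exact hyR
        · intro hvR
          by_cases hv : v ∈ ({x, y} : Set V)
          · exact Or.inr hv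
          · exact Or.inl ⟨hvR, hv⟩
      rw [hR]
      exact hprivother y hyR (Ne.symm hxney)
    · -- condition (iii)
      intro z hz hNz hzy'
      have hzR := hz.1
      have hzx : z ≠ x := fun h => hz.2 (by simp [h])
      have hzy : z ≠ y := fun h => hz.2 (by simp [h])
      have hadjyz : G.Adj y z := hzy'
      obtain ⟨u, hu1, hu2⟩ := hprivother z hzR hzx
      rcases mem_closedNbr.mp hu1 with h | h
      · -- u = z
        subst h
        have : y ∈ closedNbr G u ∩ R := ⟨mem_closedNbr.mpr (Or.inr hadjyz.symm), hyR⟩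
        rw [hu2] at this
        exact hzy (Set.mem_singleton_iff.mp this).symm
      · -- z adj u
        have hxu : G.Adj x u := hNz h
        have : x ∈ closedNbr G u ∩ R := ⟨mem_closedNbr.mpr (Or.inr hxu.symm), hxR⟩
        rw [hu2] at this
        exact hzx (Set.mem_singleton_iff.mp this).symm
    · -- DomOver
      intro w hw
      have hxw : G.Adj x w := hw.1
      have hwy : w ≠ y := hw.2
      have hwcl : w ∈ closedNbr G x := mem_closedNbr.mpr (Or.inr hxw)
      have hne : closedNbr G w ∩ R ≠ {x} := by
        intro h
        have : w ∈ privSet G x R := ⟨hwcl, h⟩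
        rw [hprivx] at this
        exact this
      have hxin : x ∈ closedNbr G w ∩ R := ⟨mem_closedNbr.mpr (Or.inr hxw.symm), hxR⟩
      obtain ⟨b, hb, hbx⟩ := exists_other hxin hne
      have hbR : b ∈ R := hb.2
      have hbw : G.Adj w b := by
        rcases mem_closedNbr.mp hb.1 with h | h
        · exfalso
          subst h
          exact hwy (hmemNx b hxw hbR)
        · exact h
      have hby : b ≠ y := fun h => noC3 h3 hxw (h ▸ hbw) hxy
      exact ⟨b, ⟨hbR, by simp [hbx, hby]⟩, hbw.symm⟩
    · -- minimality of domination
      intro S' hS' hdomS'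
      have hT : S' ∪ ({x, y} : Set V) ⊂ R := by
        constructor
        · rintro v (h | h)
          · exact (hS'.1 h).1
          · rcases h with h | h
            · rw [h]; exact hxR
            · rw [Set.mem_singleton_iff] at h; rw [h]; exact hyR
        · intro hsub
          obtain ⟨z, hzS, hzS'⟩ := Set.exists_of_ssubset hS'
          have hzR : z ∈ R := hzS.1
          have : z ∈ S' ∪ ({x, y} : Set V) := hsub hzR
          rcases this with h | h
          · exact hzS' h
          · exact hzS.2 h
      have hirrT : Irred G (S' ∪ ({x, y} : Set V)) := not_not.mp (hmin _ hT)
      have hxT : x ∈ S' ∪ ({x, y} : Set V) := Or.inr (Or.inl rfl)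
      have hpempty : privSet G x (S' ∪ ({x, y} : Set V)) = ∅ := by
        apply priv_empty_of
        intro u hu
        rcases mem_closedNbr.mp hu with h | h
        · exact ⟨y, Or.inr (Or.inr rfl), mem_closedNbr.mpr (Or.inr (h.symm ▸ hxy)),
            Ne.symm hxney⟩
        · by_cases huy : u = y
          · exact ⟨y, Or.inr (Or.inr rfl), mem_closedNbr.mpr (Or.inl huy.symm),
              Ne.symm hxney⟩
          · obtain ⟨s, hsS', hsu⟩ := hdomS' u ⟨h, huy⟩
            have hsS : s ∈ R \ ({x, y} : Set V) := hS'.1 hsS'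
            have hsx : s ≠ x := fun hh => hsS.2 (by simp [hh])
            exact ⟨s, Or.inl hsS', mem_closedNbr.mpr (Or.inr hsu.symm), hsx⟩
      obtain ⟨p, hp⟩ := hirrT x hxT
      rw [hpempty] at hp
      exact hp
  · -- backward direction
    rintro ⟨S, rfl, hSs, hprivy, hiii, hdomS, hmindom⟩
    have hxS : x ∉ S := fun h => (hSs h).1 rfl
    have hyS : y ∉ S := fun h => (hSs h).2.1 hxy
    have hSnadj : ∀ z ∈ S, ¬ G.Adj x z := fun z hz => (hSs hz).2.1
    have hSnx : ∀ z ∈ S, z ≠ x := fun z hz => (hSs hz).1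
    have hxR : x ∈ S ∪ ({x, y} : Set V) := Or.inr (Or.inl rfl)
    have hyR : y ∈ S ∪ ({x, y} : Set V) := Or.inr (Or.inr rfl)
    -- N(x) ∩ R = {y}
    have hnxR : G.neighborSet x ∩ (S ∪ ({x, y} : Set V)) = {y} := by
      ext v
      constructor
      · rintro ⟨hv, hvR⟩
        rcases hvR with h | h
        · exact absurd hv (hSnadj v h)
        · rcases h with h | h
          · exfalso; rw [h] at hv; exact G.irrefl hv
          · exact h
      · intro h
        have hvy : v = y := h
        rw [hvy]
        exact ⟨hxy, hyR⟩
    -- x has no private neighbor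
    have hprivx : privSet G x (S ∪ ({x, y} : Set V)) = ∅ := by
      apply priv_empty_of
      intro u hu
      rcases mem_closedNbr.mp hu with h | h
      · exact ⟨y, hyR, mem_closedNbr.mpr (Or.inr (h.symm ▸ hxy)), Ne.symm hxney⟩
      · by_cases huy : u = y
        · exact ⟨y, hyR, mem_closedNbr.mpr (Or.inl huy.symm), Ne.symm hxney⟩
        · obtain ⟨s, hsS, hsu⟩ := hdomS u ⟨h, huy⟩
          exact ⟨s, Or.inl hsS, mem_closedNbr.mpr (Or.inr hsu.symm), hSnx s hsS⟩
    -- private dominees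
    have hpd : ∀ z ∈ S, ∃ w, G.Adj x w ∧ w ≠ y ∧ G.Adj z w ∧
        ∀ s ∈ S, G.Adj s w → s = z := by
      intro z hz
      have hss : S \ ({z} : Set V) ⊂ S := diff_ssub hz
      have hnd := hmindom (S \ {z}) hss
      rw [DomOver] at hnd
      push_neg at hnd
      obtain ⟨w, hwB, hw⟩ := hnd
      have hwp : ∀ s ∈ S, G.Adj s w → s = z := by
        intro s hsS hsw
        by_contra hsz
        exact hw s ⟨hsS, hsz⟩ hsw
      obtain ⟨s0, hs0S, hs0w⟩ := hdomS w hwB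
      have hs0z : s0 = z := hwp s0 hs0S hs0w
      exact ⟨w, hwB.1, hwB.2, hs0z ▸ hs0w, hwp⟩
    -- every z ∈ S has a private neighbor
    have hprivz : ∀ z ∈ S, (privSet G z (S ∪ ({x, y} : Set V))).Nonempty := by
      intro z hz
      obtain ⟨hzx, hznadj, -⟩ := hSs hz
      have hzR : z ∈ S ∪ ({x, y} : Set V) := Or.inl hz
      obtain ⟨w, hxw, hwy, hzw, hwpriv⟩ := hpd z hz
      by_cases hcase : ∀ u, G.Adj z u → G.Adj x u
      · -- z is its own private neighbor
        refine ⟨z, (privSet_char hzR (mem_closedNbr.mpr (Or.inl rfl))).mpr ?_⟩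
        intro b hbR hbz
        rcases mem_closedNbr.mp hbz with h | h
        · exact h
        · exfalso
          have hxb : G.Adj x b := hcase b h
          rcases hbR with hb | hb
          · exact hSnadj b hb hxb
          · rcases hb with hb | hb
            · rw [hb] at hxb; exact G.irrefl hxb
            · rw [Set.mem_singleton_iff] at hb
              have hzny : z ∉ G.neighborSet y := hiii z hz (fun v hv => hcase v hv)
              exact hzny (hb ▸ h).symm
      · push_neg at hcase
        obtain ⟨u, hzu, hxnu⟩ := hcase
        have hux : u ≠ x := fun h => hznadj (h ▸ hzu).symm
        have huy : u ≠ y := fun h => hxnu (h.symm ▸ hxy)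
        -- u not adjacent to y  (else C5: x y u z w)
        have hynu : ¬ G.Adj y u := by
          intro hyu
          have hyz : ¬ G.Adj y z := fun h => noC3 h3 hyu hzu.symm h
          have hyw : ¬ G.Adj y w := fun h => noC3 h3 hxy h hxw
          have huw : ¬ G.Adj u w := fun h => noC3 h3 hzu.symm hzw h
          exact noC5 h5 hxy hyu hzu.symm hzw hxw.symm hxnu hznadj hyz hyw huw
        -- u ∉ S  (else C5: x w z u w')
        have huS : u ∉ S := by
          intro huS
          have huz : u ≠ z := fun h => G.irrefl (h ▸ hzu)
          obtain ⟨-, -, w', hxw', hw'u⟩ := hSs huS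
          have hwu : ¬ G.Adj w u := fun h => huz (hwpriv u huS h.symm)
          have hww' : ¬ G.Adj w w' := fun h => noC3 h3 hxw h hxw'
          have hzw' : ¬ G.Adj z w' := fun h => noC3 h3 hzu hw'u.symm h
          exact noC5 h5 hxw hzw.symm hzu hw'u.symm hxw'.symm hznadj hxnu hwu hww' hzw'
        -- u not adjacent to any other element of S  (else C6)
        have husS : ∀ s ∈ S, G.Adj s u → s = z := by
          intro s hsS hsu
          by_contra hsz
          obtain ⟨w', hxw', hw'y, hsw', hw'priv⟩ := hpd s hsS
          have hxs : ¬ G.Adj x s := hSnadj s hsS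
          have hwu : ¬ G.Adj w u := fun h => noC3 h3 hzw.symm hzu h
          have hws : ¬ G.Adj w s := fun h => hsz (hwpriv s hsS h.symm)
          have hww' : ¬ G.Adj w w' := fun h => noC3 h3 hxw h hxw'
          have hzs : ¬ G.Adj z s := fun h => noC3 h3 hzu hsu.symm h
          have hzw' : ¬ G.Adj z w' := fun h => hsz (hw'priv z hz h).symm
          have huw' : ¬ G.Adj u w' := fun h => noC3 h3 hsu.symm hsw' h
          exact noC6 h6 hxw hzw.symm hzu hsu.symm hsw' hxw'.symm
            hznadj hxnu hxs hwu hws hww' hzs hzw' huw'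
        refine ⟨u, (privSet_char hzR (mem_closedNbr.mpr (Or.inr hzu))).mpr ?_⟩
        intro b hbR hbu
        rcases hbR with hb | hb
        · rcases mem_closedNbr.mp hbu with h | h
          · exact absurd (h ▸ hb) huS
          · exact husS b hb h.symm
        · exfalso
          rcases hb with hb | hb
          · rcases mem_closedNbr.mp (hb ▸ hbu) with h | h
            · exact hux h.symm
            · exact hxnu h.symm
          · rw [Set.mem_singleton_iff] at hb
            rcases mem_closedNbr.mp (hb ▸ hbu) with h | h
            · exact huy h.symm
            · exact hynu h.symm
    refine ⟨⟨?_, ?_⟩, ?_, hnxR⟩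
    · -- Redundant
      intro hIrr
      obtain ⟨p, hp⟩ := hIrr x hxR
      rw [hprivx] at hp
      exact hp
    · -- minimality
      intro T hTsub hredT
      apply hredT
      intro t htT
      have htR : t ∈ S ∪ ({x, y} : Set V) := hTsub.1 htT
      by_cases htx : t = x
      · rw [htx] at htT ⊢
        by_cases hyT : y ∈ T
        · -- some z₀ ∈ S is missing from T
          obtain ⟨z0, hz0R, hz0T⟩ := Set.exists_of_ssubset hTsub
          have hz0S : z0 ∈ S := by
            rcases hz0R with h | h
            · exact h
            · exfalso
              rcases h with h | h
              · rw [h] at hz0T; exact hz0T htT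
              · rw [Set.mem_singleton_iff] at h; rw [h] at hz0T; exact hz0T hyT
          obtain ⟨w, hxw, hwy, hz0w, hwpriv⟩ := hpd z0 hz0S
          refine ⟨w, (privSet_char htT (mem_closedNbr.mpr (Or.inr hxw))).mpr ?_⟩
          intro b hbT hbw
          have hbR : b ∈ S ∪ ({x, y} : Set V) := hTsub.1 hbT
          rcases mem_closedNbr.mp hbw with h | h
          · exfalso
            have hxb : G.Adj x b := h.symm ▸ hxw
            rcases hbR with hb | hb
            · exact hSnadj b hb hxb
            · rcases hb with hb | hb
              · exact (hb ▸ hxb).ne rfl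
              · exact hwy (h.symm.trans (Set.mem_singleton_iff.mp hb))
          · rcases hbR with hb | hb
            · exfalso
              have : b = z0 := hwpriv b hb h.symm
              rw [this] at hbT
              exact hz0T hbT
            · rcases hb with hb | hb
              · exact hb
              · exfalso
                rw [Set.mem_singleton_iff] at hb
                exact noC3 h3 hxw (hb ▸ h) hxy
        · -- y ∉ T: x is its own private neighbor in T
          refine ⟨x, (privSet_char htT (mem_closedNbr.mpr (Or.inl rfl))).mpr ?_⟩
          intro b hbT hbx
          have hbR : b ∈ S ∪ ({x, y} : Set V) := hTsub.1 hbT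
          rcases mem_closedNbr.mp hbx with h | h
          · exact h
          · exfalso
            rcases hbR with hb | hb
            · exact hSnadj b hb h
            · rcases hb with hb | hb
              · rw [hb] at h; exact G.irrefl h
              · rw [Set.mem_singleton_iff] at hb
                rw [hb] at hbT
                exact hyT hbT
      · -- t ≠ x: monotonicity
        have hpr : (privSet G t (S ∪ ({x, y} : Set V))).Nonempty := by
          rcases htR with h | h
          · exact hprivz t h
          · rcases h with h | h
            · exact absurd h htx
            · rw [Set.mem_singleton_iff] at h; rw [h]; exact hprivy
        obtain ⟨p, hp⟩ := hpr
        exact ⟨p, privSet_mono hTsub.1 htT hp⟩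
    · -- redVerts = {x}
      ext v
      constructor
      · rintro ⟨hvR, hvpriv⟩
        rcases hvR with h | h
        · exfalso
          obtain ⟨p, hp⟩ := hprivz v h
          rw [hvpriv] at hp
          exact hp
        · rcases h with h | h
          · exact h
          · exfalso
            rw [Set.mem_singleton_iff] at h
            subst h
            obtain ⟨p, hp⟩ := hprivy
            rw [hvpriv] at hp
            exact hp
      · intro h
        have hvx : v = x := h
        rw [hvx]
        exact ⟨hxR, hprivx⟩
end

section
/- Let G be a finite simple graph that is C_3-free, C_5-free and C_6-free, and let x be a vertex of G. If Y* ⊆ N(x) is extendable with respect to x, then every subset Y ⊊ Y* with |Y| ≥ 2 is also extendable with respect to x. -/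
open Set SimpleGraph

variable {V : Type*}

section Stmt19Aux

variable {G : SimpleGraph V}

private lemma s19_noC3 (h3 : CFree G 3) {a b c : V} (hab : G.Adj a b) (hbc : G.Adj b c)
    (hca : G.Adj c a) : False := by
  have hinj : Function.Injective ![a, b, c] := by
    intro u v huv
    fin_cases u <;> fin_cases v <;> simp_all
  exact h3.elim ⟨⟨![a, b, c], hinj⟩, by
    intro u v
    fin_cases u <;> fin_cases v <;>
      simp [cycleGraph_adj', hab, hbc, hca, hab.symm, hbc.symm, hca.symm, G.irrefl] <;> decide⟩

private lemma s19_noC5 (h5 : CFree G 5) {a b c d e : V}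
    (hab : G.Adj a b) (hbc : G.Adj b c) (hcd : G.Adj c d) (hde : G.Adj d e) (hea : G.Adj e a)
    (nac : a ≠ c) (nad : a ≠ d) (nbd : b ≠ d) (nbe : b ≠ e) (nce : c ≠ e)
    (hac : ¬G.Adj a c) (had : ¬G.Adj a d) (hbd : ¬G.Adj b d) (hbe : ¬G.Adj b e)
    (hce : ¬G.Adj c e) : False := by
  have hca : ¬G.Adj c a := fun h => hac h.symm
  have hda : ¬G.Adj d a := fun h => had h.symm
  have hdb : ¬G.Adj d b := fun h => hbd h.symm
  have heb : ¬G.Adj e b := fun h => hbe h.symm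
  have hec : ¬G.Adj e c := fun h => hce h.symm
  have hinj : Function.Injective ![a, b, c, d, e] := by
    intro u v huv
    fin_cases u <;> fin_cases v <;> simp_all <;>
      first
      | exact nac huv | exact nac huv.symm
      | exact nad huv | exact nad huv.symm
      | exact nbd huv | exact nbd huv.symm
      | exact nbe huv | exact nbe huv.symm
      | exact nce huv | exact nce huv.symm
  exact h5.elim ⟨⟨![a, b, c, d, e], hinj⟩, by
    intro u v
    fin_cases u <;> fin_cases v <;>
      simp [cycleGraph_adj', hab, hbc, hcd, hde, hea, hab.symm, hbc.symm, hcd.symm, hde.symm,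
        hea.symm, hac, had, hbd, hbe, hce, hca, hda, hdb, heb, hec, G.irrefl] <;> decide⟩

private lemma s19_noC6 (h6 : CFree G 6) {a b c d e f : V}
    (hab : G.Adj a b) (hbc : G.Adj b c) (hcd : G.Adj c d) (hde : G.Adj d e)
    (hef : G.Adj e f) (hfa : G.Adj f a)
    (nac : a ≠ c) (nad : a ≠ d) (nae : a ≠ e) (nbd : b ≠ d) (nbe : b ≠ e) (nbf : b ≠ f)
    (nce : c ≠ e) (ncf : c ≠ f) (ndf : d ≠ f)
    (hac : ¬G.Adj a c) (had : ¬G.Adj a d) (hae : ¬G.Adj a e) (hbd : ¬G.Adj b d)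
    (hbe : ¬G.Adj b e) (hbf : ¬G.Adj b f) (hce : ¬G.Adj c e) (hcf : ¬G.Adj c f)
    (hdf : ¬G.Adj d f) : False := by
  have hca : ¬G.Adj c a := fun h => hac h.symm
  have hda : ¬G.Adj d a := fun h => had h.symm
  have hea : ¬G.Adj e a := fun h => hae h.symm
  have hdb : ¬G.Adj d b := fun h => hbd h.symm
  have heb : ¬G.Adj e b := fun h => hbe h.symm
  have hfb : ¬G.Adj f b := fun h => hbf h.symm
  have hec : ¬G.Adj e c := fun h => hce h.symm
  have hfc : ¬G.Adj f c := fun h => hcf h.symm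
  have hfd : ¬G.Adj f d := fun h => hdf h.symm
  have v5 : (![a, b, c, d, e, f] : Fin 6 → V) 5 = f := rfl
  have hinj : Function.Injective ![a, b, c, d, e, f] := by
    intro u v huv
    fin_cases u <;> fin_cases v <;> simp_all <;>
      first
      | exact nac huv | exact nac huv.symm
      | exact nad huv | exact nad huv.symm
      | exact nae huv | exact nae huv.symm
      | exact nbd huv | exact nbd huv.symm
      | exact nbe huv | exact nbe huv.symm
      | exact nbf huv | exact nbf huv.symm
      | exact nce huv | exact nce huv.symm
      | exact ncf huv | exact ncf huv.symm
      | exact ndf huv | exact ndf huv.symm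
  exact h6.elim ⟨⟨![a, b, c, d, e, f], hinj⟩, by
    intro u v
    fin_cases u <;> fin_cases v <;>
      simp [v5, cycleGraph_adj', hab, hbc, hcd, hde, hef, hfa, hab.symm, hbc.symm, hcd.symm,
        hde.symm, hef.symm, hfa.symm, hac, had, hae, hbd, hbe, hbf, hce, hcf, hdf,
        hca, hda, hea, hdb, heb, hfb, hec, hfc, hfd, G.irrefl] <;> decide⟩

private lemma s19_priv_anti {I J : Set V} (hIJ : I ⊆ J) {v : V} (hv : v ∈ I) :
    privSet G v J ⊆ privSet G v I := by
  rintro p ⟨hp1, hp2⟩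
  refine ⟨hp1, ?_⟩
  have hvmem : v ∈ closedNbr G p := by
    have : v ∈ closedNbr G p ∩ J := by rw [hp2]; rfl
    exact this.1
  refine Set.eq_singleton_iff_unique_mem.mpr ⟨⟨hvmem, hv⟩, ?_⟩
  rintro u ⟨hu1, hu2⟩
  have : u ∈ closedNbr G p ∩ J := ⟨hu1, hIJ hu2⟩
  rw [hp2] at this
  exact this

private lemma s19_irred_subset {I J : Set V} (hIJ : I ⊆ J) (hJ : Irred G J) : Irred G I :=
  fun v hv => Set.Nonempty.mono (s19_priv_anti hIJ hv) (hJ v (hIJ hv))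

private lemma s19_exists_minimal_subset {α : Type*} (P : Set α → Prop) :
    ∀ (S : Set α), S.Finite → P S → ∃ T, T ⊆ S ∧ P T ∧ ∀ T', T' ⊂ T → ¬ P T' := by
  intro S hfin hS
  generalize hn : S.ncard = n
  induction n using Nat.strong_induction_on generalizing S with
  | _ n ih =>
    by_cases h : ∀ T, T ⊂ S → ¬ P T
    · exact ⟨S, subset_rfl, hS, h⟩
    · push_neg at h
      obtain ⟨T, hTS, hPT⟩ := h
      obtain ⟨T', h1, h2, h3⟩ := ih T.ncard (by rw [← hn]; exact Set.ncard_lt_ncard hTS hfin)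
        T (hfin.subset hTS.subset) hPT rfl
      exact ⟨T', h1.trans hTS.subset, h2, h3⟩

end Stmt19Aux

/-- in `(C₃, C₅, C₆)`-free graphs, extendability is downward closed: if
`Y⋆ ⊆ N(x)` is extendable w.r.t. `x`, then every proper subset `Y ⊊ Y⋆` with `|Y| ≥ 2`
is also extendable w.r.t. `x`. -/
theorem stmt19 [Fintype V] (G : SimpleGraph V) (h3 : CFree G 3) (h5 : CFree G 5)
    (h6 : CFree G 6) (x : V) (Ystar : Set V) (hYs : Ystar ⊆ G.neighborSet x)
    (hYscard : 2 ≤ Ystar.ncard)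
    (hext : ∃ R : Set V, MinRedundant G R ∧ redVerts G R = {x} ∧
      R ∩ G.neighborSet x = Ystar)
    (Y : Set V) (hYsub : Y ⊂ Ystar) (hYcard : 2 ≤ Y.ncard) :
    ∃ R : Set V, MinRedundant G R ∧ redVerts G R = {x} ∧ R ∩ G.neighborSet x = Y := by
  classical
  obtain ⟨R, ⟨hRred, hRmin⟩, hRvert, hRN⟩ := hext
  -- membership tools for closed neighbourhoods
  have memN : ∀ u v : V, u ∈ closedNbr G v ↔ u = v ∨ G.Adj v u := by
    intro u v; simp [closedNbr]
  have adjN : ∀ {u v : V}, G.Adj v u → u ∈ closedNbr G v := by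
    intro u v h; exact (memN u v).mpr (Or.inr h)
  have hselfN : ∀ v : V, v ∈ closedNbr G v := fun v => (memN v v).mpr (Or.inl rfl)
  have Ncomm : ∀ u v : V, u ∈ closedNbr G v ↔ v ∈ closedNbr G u := by
    intro u v
    rw [memN, memN]
    constructor
    · rintro (rfl | h)
      · exact Or.inl rfl
      · exact Or.inr h.symm
    · rintro (rfl | h)
      · exact Or.inl rfl
      · exact Or.inr h.symm
  -- basic facts about R
  have hxRv : x ∈ redVerts G R := by rw [hRvert]; rfl
  obtain ⟨hxR, hprivx⟩ := hxRv
  have hpriv : ∀ v ∈ R, v ≠ x → (privSet G v R).Nonempty := by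
    intro v hv hvx
    rcases Set.eq_empty_or_nonempty (privSet G v R) with h | h
    · have hvred : v ∈ redVerts G R := ⟨hv, h⟩
      rw [hRvert] at hvred
      exact absurd hvred (by simpa using hvx)
    · exact h
  have hnotpriv : ∀ p ∈ closedNbr G x, closedNbr G p ∩ R ≠ {x} := fun p hp h =>
    (Set.eq_empty_iff_forall_notMem.mp hprivx p) ⟨hp, h⟩
  have hadjY : ∀ y ∈ Ystar, G.Adj x y := fun y hy => hYs hy
  have hxY : x ∉ Ystar := fun h => G.irrefl (hadjY x h)
  have hYR : Ystar ⊆ R := by rw [← hRN]; exact Set.inter_subset_left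
  have hYsubYs : Y ⊆ Ystar := hYsub.subset
  have hYnbr : ∀ y ∈ Y, G.Adj x y := fun y hy => hadjY y (hYsubYs hy)
  obtain ⟨y1, hy1, y2, hy2, hy12⟩ : ∃ a ∈ Ystar, ∃ b ∈ Ystar, a ≠ b :=
    (Set.one_lt_ncard (Set.toFinite Ystar)).mp (by omega)
  -- minimality witnesses within R
  have hA : ∀ r ∈ R, r ≠ x → ∃ p ∈ closedNbr G x, closedNbr G p ∩ R = {x, r} := by
    intro r hr hrx
    have hss : R \ {r} ⊂ R := Set.sdiff_singleton_ssubset.mpr hr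
    have hirr : Irred G (R \ {r}) := not_not.mp (hRmin _ hss)
    obtain ⟨p, hp1, hp2⟩ := hirr x ⟨hxR, fun h => hrx ((Set.mem_singleton_iff.mp h).symm)⟩
    have hrp : r ∈ closedNbr G p := by
      by_contra hrp
      refine hnotpriv p hp1 ?_
      rw [← hp2]
      ext u
      simp only [Set.mem_inter_iff, Set.mem_diff, Set.mem_singleton_iff]
      exact ⟨fun ⟨h1, h2⟩ => ⟨h1, h2, fun h => hrp (h ▸ h1)⟩, fun ⟨h1, h2, _⟩ => ⟨h1, h2⟩⟩
    refine ⟨p, hp1, ?_⟩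
    have hxp : x ∈ closedNbr G p := (Ncomm p x).mp hp1
    ext u
    simp only [Set.mem_inter_iff, Set.mem_insert_iff, Set.mem_singleton_iff]
    constructor
    · rintro ⟨h1, h2⟩
      by_cases hur : u = r
      · exact Or.inr hur
      · have hu : u ∈ closedNbr G p ∩ (R \ {r}) := ⟨h1, h2, by simpa using hur⟩
        rw [hp2] at hu
        exact Or.inl hu
    · rintro (rfl | rfl)
      · exact ⟨hxp, hxR⟩
      · exact ⟨hrp, hr⟩
  -- structure of Ystar inside R
  have hB : ∀ y ∈ Ystar, closedNbr G y ∩ R = {x, y} := by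
    intro y hy
    have hyx : y ≠ x := fun h => hxY (h ▸ hy)
    obtain ⟨p, hp, hps⟩ := hA y (hYR hy) hyx
    have hpx : p ≠ x := by
      rintro rfl
      have m1 : y1 ∈ closedNbr G p ∩ R := ⟨adjN (hadjY y1 hy1), hYR hy1⟩
      have m2 : y2 ∈ closedNbr G p ∩ R := ⟨adjN (hadjY y2 hy2), hYR hy2⟩
      rw [hps] at m1 m2
      rcases m1 with rfl | rfl
      · exact hxY hy1
      · rcases m2 with rfl | rfl
        · exact hxY hy2
        · exact hy12 rfl
    have hpadj : G.Adj x p := by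
      rcases (memN p x).mp hp with h | h
      · exact absurd h hpx
      · exact h
    by_cases hpR : p ∈ R
    · have hpm : p ∈ ({x, y} : Set V) := by rw [← hps]; exact ⟨hselfN p, hpR⟩
      rcases hpm with h | h
      · exact absurd h hpx
      · rw [Set.mem_singleton_iff] at h
        subst h
        exact hps
    · have hyp : y ∈ closedNbr G p := by
        have : y ∈ ({x, y} : Set V) := Or.inr rfl
        rw [← hps] at this
        exact this.1
      have hypadj : G.Adj p y := by
        rcases (memN y p).mp hyp with h | h
        · exact absurd (h ▸ hYR hy) hpR
        · exact h
      exact (s19_noC3 h3 hpadj hypadj (hadjY y hy).symm).elim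
  have hYind : ∀ y ∈ Ystar, ∀ y' ∈ Ystar, y ≠ y' → ¬ G.Adj y y' := by
    intro y hy y' hy' hne hadj
    exact s19_noC3 h3 (hadjY y hy) hadj (hadjY y' hy').symm
  -- the distance-2 part of R
  set S : Set V := R \ closedNbr G x with hSdef
  have hSR : S ⊆ R := Set.diff_subset
  have hSNx : ∀ s ∈ S, s ∉ closedNbr G x := fun s hs => hs.2
  have hSx : ∀ s ∈ S, s ≠ x := fun s hs h => hs.2 (h ▸ hselfN x)
  have hSadj : ∀ s ∈ S, ¬ G.Adj x s := fun s hs h => hs.2 (adjN h)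
  have hSY : ∀ s ∈ S, s ∉ Ystar := fun s hs h => hs.2 (adjN (hadjY s h))
  have hcase : ∀ u ∈ R, u = x ∨ u ∈ Ystar ∨ u ∈ S := by
    intro u hu
    by_cases h : u ∈ closedNbr G x
    · rcases (memN u x).mp h with h' | h'
      · exact Or.inl h'
      · exact Or.inr (Or.inl (by rw [← hRN]; exact ⟨hu, h'⟩))
    · exact Or.inr (Or.inr ⟨hu, h⟩)
  -- domination of N(x) \ Ystar by S
  have hD : ∀ v, G.Adj x v → v ∉ Ystar → ∃ s ∈ S, G.Adj s v := by
    intro v hv hvY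
    have hvN : v ∈ closedNbr G x := adjN hv
    have hne := hnotpriv v hvN
    have hxv : x ∈ closedNbr G v ∩ R := ⟨adjN hv.symm, hxR⟩
    have hex : ∃ u ∈ closedNbr G v ∩ R, u ≠ x := by
      by_contra h
      push_neg at h
      exact hne (Set.eq_singleton_iff_unique_mem.mpr ⟨hxv, h⟩)
    obtain ⟨u, ⟨huN, huR⟩, hux⟩ := hex
    have huv : u ≠ v := by
      rintro rfl
      exact hvY (by rw [← hRN]; exact ⟨huR, hv⟩)
    have hadjvu : G.Adj v u := by
      rcases (memN u v).mp huN with h | h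
      · exact absurd h huv
      · exact h
    rcases hcase u huR with rfl | hu | hu
    · exact absurd rfl hux
    · exact (s19_noC3 h3 (hadjY u hu) hadjvu.symm hv.symm).elim
    · exact ⟨u, hu, hadjvu.symm⟩
  -- choose private neighbours for the vertices of Ystar
  have hE : ∀ y ∈ Ystar, ∃ z, z ∈ closedNbr G y ∧ closedNbr G z ∩ R = {y} := by
    intro y hy
    obtain ⟨z, hz⟩ := hpriv y (hYR hy) (fun h => hxY (h ▸ hy))
    exact ⟨z, hz.1, hz.2⟩
  choose! zf hzf1 hzf2 using hE
  have hzmem : ∀ y ∈ Ystar, ∀ u, u ∈ closedNbr G (zf y) → u ∈ R → u = y := by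
    intro y hy u h1 h2
    have : u ∈ ({y} : Set V) := by rw [← hzf2 y hy]; exact ⟨h1, h2⟩
    simpa using this
  have hzney : ∀ y ∈ Ystar, zf y ≠ y := by
    intro y hy h
    have hx : x ∈ closedNbr G (zf y) := by rw [h]; exact adjN (hadjY y hy).symm
    have := hzmem y hy x hx hxR
    exact hxY (this ▸ hy)
  have hzadj : ∀ y ∈ Ystar, G.Adj y (zf y) := by
    intro y hy
    rcases (memN (zf y) y).mp (hzf1 y hy) with h | h
    · exact absurd h (hzney y hy)
    · exact h
  have hzNx : ∀ y ∈ Ystar, zf y ∉ closedNbr G x := by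
    intro y hy h
    have hx : x ∈ closedNbr G (zf y) := (Ncomm (zf y) x).mp h
    have := hzmem y hy x hx hxR
    exact hxY (this ▸ hy)
  have hznR : ∀ y ∈ Ystar, zf y ∉ R := by
    intro y hy h
    exact hzney y hy (hzmem y hy (zf y) (hselfN _) h)
  -- C5-freeness: the chosen private neighbours are pairwise nonadjacent and distinct
  have hzz : ∀ y ∈ Ystar, ∀ y' ∈ Ystar, y ≠ y' → zf y ∉ closedNbr G (zf y') := by
    intro y hy y' hy' hne h
    rcases (memN (zf y) (zf y')).mp h with heq | hadj
    · have h0 : y ∈ closedNbr G (zf y) := (Ncomm y (zf y)).mpr (adjN (hzadj y hy))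
      rw [heq] at h0
      exact hne (hzmem y' hy' y h0 (hYR hy))
    · -- induced C5 : x - y - zf y - zf y' - y' - x
      have nac : x ≠ zf y := fun h' => hzNx y hy (by rw [← h']; exact hselfN x)
      have nad : x ≠ zf y' := fun h' => hzNx y' hy' (by rw [← h']; exact hselfN x)
      have nbd : y ≠ zf y' := fun h' => hzNx y' hy' (by rw [← h']; exact adjN (hadjY y hy))
      have nce : zf y ≠ y' := fun h' => hzNx y hy (by rw [h']; exact adjN (hadjY y' hy'))
      have hac : ¬ G.Adj x (zf y) := fun h' => hzNx y hy (adjN h')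
      have had : ¬ G.Adj x (zf y') := fun h' => hzNx y' hy' (adjN h')
      have hbd : ¬ G.Adj y (zf y') := fun h' =>
        hne (hzmem y' hy' y ((memN y (zf y')).mpr (Or.inr h'.symm)) (hYR hy))
      have hce : ¬ G.Adj (zf y) y' := fun h' =>
        hne (hzmem y hy y' ((memN y' (zf y)).mpr (Or.inr h')) (hYR hy')).symm
      exact s19_noC5 h5 (hadjY y hy) (hzadj y hy) hadj.symm (hzadj y' hy').symm
        (hadjY y' hy').symm nac nad nbd hne nce hac had hbd (hYind y hy y' hy' hne) hce
  -- the replacement set Z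
  set Z : Set V := zf '' (Ystar \ Y) with hZdef
  have hZmem : ∀ z ∈ Z, ∃ y' , (y' ∈ Ystar \ Y) ∧ zf y' = z := by
    intro z hz
    obtain ⟨y', hy', hzy⟩ := hz
    exact ⟨y', hy', hzy⟩
  -- choose a minimal subset of S that (together with Z) dominates N(x) \ Ystar
  have hPS : ∀ v, G.Adj x v → v ∉ Ystar → ∃ t ∈ S ∪ Z, G.Adj t v := by
    intro v h1 h2
    obtain ⟨s, hs, hadj⟩ := hD v h1 h2
    exact ⟨s, Or.inl hs, hadj⟩
  obtain ⟨S'', hS''S, hS''P, hS''min⟩ := s19_exists_minimal_subset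
    (fun T => ∀ v, G.Adj x v → v ∉ Ystar → ∃ t ∈ T ∪ Z, G.Adj t v) S (Set.toFinite S) hPS
  -- each element of S'' has a "minimality witness" in N(x) \ Ystar
  have hvsE : ∀ s ∈ S'', ∃ v, G.Adj x v ∧ v ∉ Ystar ∧ G.Adj s v ∧
      ∀ t ∈ S'' ∪ Z, G.Adj t v → t = s := by
    intro s hs
    have hss : S'' \ {s} ⊂ S'' := Set.sdiff_singleton_ssubset.mpr hs
    have hnP := hS''min _ hss
    push_neg at hnP
    obtain ⟨v, hv1, hv2, hv3⟩ := hnP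
    obtain ⟨t, ht, htadj⟩ := hS''P v hv1 hv2
    have hts : t = s := by
      by_contra h
      refine hv3 t ?_ htadj
      rcases ht with h' | h'
      · exact Or.inl ⟨h', by simpa using h⟩
      · exact Or.inr h'
    subst hts
    refine ⟨v, hv1, hv2, htadj, ?_⟩
    intro t' ht' hadj'
    by_contra h
    refine hv3 t' ?_ hadj'
    rcases ht' with h' | h'
    · exact Or.inl ⟨h', by simpa using h⟩
    · exact Or.inr h'
  choose! vs hvs1 hvs2 hvs3 hvs4 using hvsE
  -- private neighbours for elements of S''
  have hwE : ∀ s ∈ S'', ∃ w, w ∈ closedNbr G s ∧ closedNbr G w ∩ R = {s} := by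
    intro s hs
    obtain ⟨w, hw⟩ := hpriv s (hSR (hS''S hs)) (hSx s (hS''S hs))
    exact ⟨w, hw.1, hw.2⟩
  choose! wf hwf1 hwf2 using hwE
  have hwmem : ∀ s ∈ S'', ∀ u, u ∈ closedNbr G (wf s) → u ∈ R → u = s := by
    intro s hs u h1 h2
    have : u ∈ ({s} : Set V) := by rw [← hwf2 s hs]; exact ⟨h1, h2⟩
    simpa using this
  -- C6-freeness: the private neighbours of S'' avoid Z
  have hwZ : ∀ s ∈ S'', ∀ y' ∈ Ystar \ Y, zf y' ∉ closedNbr G (wf s) := by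
    intro s hs y' hy'D h
    have hy' : y' ∈ Ystar := hy'D.1
    have hsS : s ∈ S := hS''S hs
    have hsR : s ∈ R := hSR hsS
    rcases (memN (zf y') (wf s)).mp h with heq | hadjwz
    · have hy'N : y' ∈ closedNbr G (wf s) := by
        rw [← heq]
        exact (Ncomm y' (zf y')).mpr (adjN (hzadj y' hy'))
      have : y' = s := hwmem s hs y' hy'N (hYR hy')
      exact hSY s hsS (by rw [← this]; exact hy')
    · have hxv : G.Adj x (vs s) := hvs1 s hs
      have hvY : vs s ∉ Ystar := hvs2 s hs
      have hsv : G.Adj s (vs s) := hvs3 s hs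
      have hzZ : zf y' ∈ Z := ⟨y', hy'D, rfl⟩
      have hws : wf s ≠ s := by
        rintro heq2
        have hs2 : s ∈ closedNbr G (zf y') := by
          have hadj' : G.Adj s (zf y') := by rw [← heq2]; exact hadjwz
          exact (memN s (zf y')).mpr (Or.inr hadj'.symm)
        have : s = y' := hzmem y' hy' s hs2 hsR
        exact hSY s hsS (by rw [this]; exact hy')
      have hadjsw : G.Adj s (wf s) := by
        rcases (memN (wf s) s).mp (hwf1 s hs) with h' | h'
        · exact absurd h' hws
        · exact h'
      have ncf : s ≠ y' := fun h' => hSY s hsS (by rw [h']; exact hy')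
      have nac : x ≠ s := (hSx s hsS).symm
      have nad : x ≠ wf s := by
        intro h'
        have : x = s := hwmem s hs x (by rw [← h']; exact hselfN x) hxR
        exact nac (this)
      have nae : x ≠ zf y' := fun h' => hzNx y' hy' (by rw [← h']; exact hselfN x)
      have nbd : vs s ≠ wf s := by
        intro h'
        have hxw : x ∈ closedNbr G (wf s) := by
          rw [← h']
          exact (memN x (vs s)).mpr (Or.inr hxv.symm)
        exact nac (hwmem s hs x hxw hxR)
      have nbe : vs s ≠ zf y' := by
        intro h'
        exact hzNx y' hy' (by rw [← h']; exact adjN hxv)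
      have nbf : vs s ≠ y' := fun h' => hvY (by rw [h']; exact hy')
      have nce : s ≠ zf y' := fun h' => hznR y' hy' (by rw [← h']; exact hsR)
      have ndf : wf s ≠ y' := fun h' =>
        ncf ((hwmem s hs y' (by rw [← h']; exact hselfN (wf s)) (hYR hy')).symm)
      have hac : ¬ G.Adj x s := hSadj s hsS
      have had : ¬ G.Adj x (wf s) := fun h' =>
        nac (hwmem s hs x ((memN x (wf s)).mpr (Or.inr h'.symm)) hxR)
      have hae : ¬ G.Adj x (zf y') := fun h' => hzNx y' hy' (adjN h')
      have hbd : ¬ G.Adj (vs s) (wf s) := fun h' => s19_noC3 h3 hsv h' hadjsw.symm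
      have hbe : ¬ G.Adj (vs s) (zf y') := by
        intro h'
        have : zf y' = s := hvs4 s hs (zf y') (Or.inr hzZ) h'.symm
        exact hznR y' hy' (by rw [this]; exact hsR)
      have hbf : ¬ G.Adj (vs s) y' := fun h' => s19_noC3 h3 hxv h' (hadjY y' hy').symm
      have hce : ¬ G.Adj s (zf y') := fun h' =>
        ncf (hzmem y' hy' s ((memN s (zf y')).mpr (Or.inr h'.symm)) hsR)
      have hcf : ¬ G.Adj s y' := by
        intro h'
        have : s ∈ ({x, y'} : Set V) := by
          rw [← hB y' hy']
          exact ⟨(memN s y').mpr (Or.inr h'.symm), hsR⟩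
        rcases this with h'' | h''
        · exact nac h''.symm
        · exact ncf h''
      have hdf : ¬ G.Adj (wf s) y' := fun h' =>
        ncf ((hwmem s hs y' ((memN y' (wf s)).mpr (Or.inr h')) (hYR hy')).symm)
      exact s19_noC6 h6 hxv hsv.symm hadjsw hadjwz (hzadj y' hy').symm (hadjY y' hy').symm
        nac nad nae nbd nbe nbf nce ncf ndf hac had hae hbd hbe hbf hce hcf hdf
  -- the new minimal redundant set
  set R' : Set V := insert x (Y ∪ S'' ∪ Z) with hR'def
  have hmemR' : ∀ u, u ∈ R' ↔ u = x ∨ u ∈ Y ∨ u ∈ S'' ∨ u ∈ Z := by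
    intro u
    simp [hR'def, Set.mem_insert_iff, Set.mem_union, or_assoc]
  have hxR' : x ∈ R' := (hmemR' x).mpr (Or.inl rfl)
  have hYR' : Y ⊆ R' := fun u hu => (hmemR' u).mpr (Or.inr (Or.inl hu))
  have hS''R' : S'' ⊆ R' := fun u hu => (hmemR' u).mpr (Or.inr (Or.inr (Or.inl hu)))
  have hZR' : Z ⊆ R' := fun u hu => (hmemR' u).mpr (Or.inr (Or.inr (Or.inr hu)))
  -- (1) private neighbours of the vertices of Y in R'
  have hNzY : ∀ y ∈ Y, closedNbr G (zf y) ∩ R' = {y} := by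
    intro y hyY
    have hyYs : y ∈ Ystar := hYsubYs hyY
    ext u
    simp only [Set.mem_inter_iff, Set.mem_singleton_iff]
    constructor
    · rintro ⟨h1, h2⟩
      rcases (hmemR' u).mp h2 with rfl | hu | hu | hu
      · exact hzmem y hyYs u h1 hxR
      · exact hzmem y hyYs u h1 (hYR (hYsubYs hu))
      · exact hzmem y hyYs u h1 (hSR (hS''S hu))
      · obtain ⟨y'', hy''D, rfl⟩ := hZmem u hu
        have hne : y'' ≠ y := fun h => hy''D.2 (h ▸ hyY)
        exact absurd h1 (hzz y'' hy''D.1 y hyYs hne)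
    · rintro rfl
      exact ⟨(Ncomm _ _).mpr (adjN (hzadj _ hyYs)), hYR' hyY⟩
  -- (2) private neighbours of the vertices of S'' in R'
  have hNw : ∀ s ∈ S'', closedNbr G (wf s) ∩ R' = {s} := by
    intro s hs
    ext u
    simp only [Set.mem_inter_iff, Set.mem_singleton_iff]
    constructor
    · rintro ⟨h1, h2⟩
      rcases (hmemR' u).mp h2 with rfl | hu | hu | hu
      · exact hwmem s hs u h1 hxR
      · exact hwmem s hs u h1 (hYR (hYsubYs hu))
      · exact hwmem s hs u h1 (hSR (hS''S hu))
      · obtain ⟨y'', hy''D, rfl⟩ := hZmem u hu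
        exact absurd h1 (hwZ s hs y'' hy''D)
    · rintro rfl
      exact ⟨(Ncomm _ _).mpr (hwf1 _ hs), hS''R' hs⟩
  -- (3) vertices of Z are their own private neighbours in R'
  have hNz' : ∀ y' ∈ Ystar \ Y, closedNbr G (zf y') ∩ R' = {zf y'} := by
    intro y' hy'D
    have hy' : y' ∈ Ystar := hy'D.1
    ext u
    simp only [Set.mem_inter_iff, Set.mem_singleton_iff]
    constructor
    · rintro ⟨h1, h2⟩
      rcases (hmemR' u).mp h2 with rfl | hu | hu | hu
      · have hxy : u = y' := hzmem y' hy' u h1 hxR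
        exact absurd hy' (by rw [← hxy]; exact hxY)
      · have heq : u = y' := hzmem y' hy' u h1 (hYR (hYsubYs hu))
        exact absurd (heq ▸ hu) hy'D.2
      · have heq : u = y' := hzmem y' hy' u h1 (hSR (hS''S hu))
        exact absurd hy' (hSY y' (heq ▸ hS''S hu))
      · obtain ⟨y'', hy''D, rfl⟩ := hZmem u hu
        by_cases hyy : y'' = y'
        · rw [hyy]
        · exact absurd h1 (hzz y'' hy''D.1 y' hy' hyy)
    · rintro rfl
      exact ⟨hselfN _, hZR' ⟨y', hy'D, rfl⟩⟩
  -- (4) minimality witnesses for the vertices of Y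
  have hNy : ∀ y ∈ Y, closedNbr G y ∩ R' = {x, y} := by
    intro y hyY
    have hyYs : y ∈ Ystar := hYsubYs hyY
    ext u
    simp only [Set.mem_inter_iff, Set.mem_insert_iff, Set.mem_singleton_iff]
    constructor
    · rintro ⟨h1, h2⟩
      rcases (hmemR' u).mp h2 with rfl | hu | hu | hu
      · exact Or.inl rfl
      · have : u ∈ ({x, y} : Set V) := by
          rw [← hB y hyYs]; exact ⟨h1, hYR (hYsubYs hu)⟩
        simpa using this
      · have : u ∈ ({x, y} : Set V) := by
          rw [← hB y hyYs]; exact ⟨h1, hSR (hS''S hu)⟩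
        simpa using this
      · obtain ⟨y'', hy''D, rfl⟩ := hZmem u hu
        have heq : y = y'' := hzmem y'' hy''D.1 y ((Ncomm y (zf y'')).mpr h1) (hYR hyYs)
        exact absurd (heq ▸ hyY) hy''D.2
    · rintro (rfl | rfl)
      · exact ⟨(memN u y).mpr (Or.inr (hadjY y hyYs).symm), hxR'⟩
      · exact ⟨hselfN u, hYR' hyY⟩
  -- (5) minimality witnesses for the vertices of S''
  have hNv : ∀ s ∈ S'', closedNbr G (vs s) ∩ R' = {x, s} := by
    intro s hs
    ext u
    simp only [Set.mem_inter_iff, Set.mem_insert_iff, Set.mem_singleton_iff]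
    constructor
    · rintro ⟨h1, h2⟩
      rcases (hmemR' u).mp h2 with rfl | hu | hu | hu
      · exact Or.inl rfl
      · rcases (memN u (vs s)).mp h1 with h' | h'
        · exact absurd (h' ▸ hYsubYs hu) (hvs2 s hs)
        · exact (s19_noC3 h3 (hvs1 s hs) h' (hadjY u (hYsubYs hu)).symm).elim
      · rcases (memN u (vs s)).mp h1 with h' | h'
        · exact absurd (by rw [h']; exact hvs1 s hs) (hSadj u (hS''S hu))
        · exact Or.inr (hvs4 s hs u (Or.inl hu) h'.symm)
      · rcases (memN u (vs s)).mp h1 with h' | h'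
        · obtain ⟨y'', hy''D, rfl⟩ := hZmem u hu
          exact absurd (by rw [h']; exact adjN (hvs1 s hs)) (hzNx y'' hy''D.1)
        · exact Or.inr (hvs4 s hs u (Or.inr hu) h'.symm)
    · rintro (rfl | rfl)
      · exact ⟨(memN _ _).mpr (Or.inr (hvs1 _ hs).symm), hxR'⟩
      · exact ⟨(memN _ _).mpr (Or.inr (hvs3 _ hs).symm), hS''R' hs⟩
  -- (6) minimality witnesses for the vertices of Z
  have hNy' : ∀ y' ∈ Ystar \ Y, closedNbr G y' ∩ R' = {x, zf y'} := by
    intro y' hy'D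
    have hy' : y' ∈ Ystar := hy'D.1
    ext u
    simp only [Set.mem_inter_iff, Set.mem_insert_iff, Set.mem_singleton_iff]
    constructor
    · rintro ⟨h1, h2⟩
      rcases (hmemR' u).mp h2 with rfl | hu | hu | hu
      · exact Or.inl rfl
      · have : u ∈ ({x, y'} : Set V) := by
          rw [← hB y' hy']; exact ⟨h1, hYR (hYsubYs hu)⟩
        rcases this with h' | h'
        · exact Or.inl h'
        · rw [Set.mem_singleton_iff] at h'
          exact absurd (h' ▸ hu) hy'D.2
      · have : u ∈ ({x, y'} : Set V) := by
          rw [← hB y' hy']; exact ⟨h1, hSR (hS''S hu)⟩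
        rcases this with h' | h'
        · exact Or.inl h'
        · rw [Set.mem_singleton_iff] at h'
          exact absurd hy' (hSY y' (h' ▸ hS''S hu))
      · obtain ⟨y'', hy''D, rfl⟩ := hZmem u hu
        have heq : y' = y'' := hzmem y'' hy''D.1 y' ((Ncomm y' (zf y'')).mpr h1) (hYR hy')
        exact Or.inr (by rw [heq])
    · rintro (rfl | rfl)
      · exact ⟨(memN u y').mpr (Or.inr (hadjY y' hy').symm), hxR'⟩
      · exact ⟨adjN (hzadj y' hy'), hZR' ⟨y', hy'D, rfl⟩⟩
  -- x has no private neighbour with respect to R'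
  have hxpriv' : privSet G x R' = ∅ := by
    rw [Set.eq_empty_iff_forall_notMem]
    rintro p ⟨hp1, hp2⟩
    rcases (memN p x).mp hp1 with rfl | hadj
    · obtain ⟨y0, hy0⟩ : Y.Nonempty := Set.nonempty_of_ncard_ne_zero (by omega)
      have : y0 ∈ closedNbr G p ∩ R' := ⟨adjN (hYnbr y0 hy0), hYR' hy0⟩
      rw [hp2] at this
      exact hxY (by rw [← this]; exact hYsubYs hy0)
    · by_cases hpY : p ∈ Ystar
      · by_cases hpYY : p ∈ Y
        · have : p ∈ closedNbr G p ∩ R' := ⟨hselfN p, hYR' hpYY⟩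
          rw [hp2] at this
          exact hxY (by rw [← this]; exact hpY)
        · have : zf p ∈ closedNbr G p ∩ R' := ⟨adjN (hzadj p hpY), hZR' ⟨p, ⟨hpY, hpYY⟩, rfl⟩⟩
          rw [hp2] at this
          exact hzNx p hpY (by rw [this]; exact hselfN x)
      · obtain ⟨t, ht, htadj⟩ := hS''P p hadj hpY
        have hmem : t ∈ closedNbr G p ∩ R' := by
          refine ⟨(memN t p).mpr (Or.inr htadj.symm), ?_⟩
          rcases ht with h' | h'
          · exact hS''R' h'
          · exact hZR' h'
        rw [hp2] at hmem
        rcases ht with h' | h'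
        · exact hSx t (hS''S h') hmem
        · obtain ⟨y'', hy''D, rfl⟩ := hZmem t h'
          exact hzNx y'' hy''D.1 (by rw [hmem]; exact hselfN x)
  -- every vertex of R' other than x has a private neighbour
  have hallpriv : ∀ v ∈ R', v ≠ x → (privSet G v R').Nonempty := by
    intro v hv hvx
    rcases (hmemR' v).mp hv with rfl | hv' | hv' | hv'
    · exact absurd rfl hvx
    · exact ⟨zf v, adjN (hzadj v (hYsubYs hv')), hNzY v hv'⟩
    · exact ⟨wf v, hwf1 v hv', hNw v hv'⟩
    · obtain ⟨y', hy'D, rfl⟩ := hZmem v hv'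
      exact ⟨zf y', hselfN _, hNz' y' hy'D⟩
  refine ⟨R', ⟨?_, ?_⟩, ?_, ?_⟩
  · -- Redundant
    intro hIr
    obtain ⟨p, hp⟩ := hIr x hxR'
    rw [hxpriv'] at hp
    exact hp
  · -- minimality
    intro T hT hredT
    refine hredT ?_
    obtain ⟨r, hrR', hrT⟩ := Set.exists_of_ssubset hT
    have hTsub : T ⊆ R' \ {r} := fun u hu =>
      ⟨hT.subset hu, fun h => hrT ((Set.mem_singleton_iff.mp h) ▸ hu)⟩
    refine s19_irred_subset hTsub ?_
    intro v hvmem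
    obtain ⟨hvR', hvr⟩ := hvmem
    by_cases hvx : v = x
    · subst hvx
      have hxr : v ≠ r := fun h => hvr (by simp [h])
      rcases (hmemR' r).mp hrR' with rfl | hr | hr | hr
      · exact absurd rfl hxr
      · refine ⟨r, adjN (hYnbr r hr), ?_⟩
        ext u
        simp only [Set.mem_inter_iff, Set.mem_diff, Set.mem_singleton_iff]
        constructor
        · rintro ⟨h1, h2, h3⟩
          have : u ∈ ({v, r} : Set V) := by rw [← hNy r hr]; exact ⟨h1, h2⟩
          rcases this with h' | h'
          · exact h'
          · exact absurd (Set.mem_singleton_iff.mp h') h3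
        · rintro rfl
          exact ⟨(memN _ _).mpr (Or.inr (hYnbr r hr).symm), hxR', hxr⟩
      · refine ⟨vs r, adjN (hvs1 r hr), ?_⟩
        ext u
        simp only [Set.mem_inter_iff, Set.mem_diff, Set.mem_singleton_iff]
        constructor
        · rintro ⟨h1, h2, h3⟩
          have : u ∈ ({v, r} : Set V) := by rw [← hNv r hr]; exact ⟨h1, h2⟩
          rcases this with h' | h'
          · exact h'
          · exact absurd (Set.mem_singleton_iff.mp h') h3
        · rintro rfl
          exact ⟨(memN u (vs r)).mpr (Or.inr (hvs1 r hr).symm), hxR', hxr⟩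
      · obtain ⟨y', hy'D, rfl⟩ := hZmem r hr
        refine ⟨y', adjN (hadjY y' hy'D.1), ?_⟩
        ext u
        simp only [Set.mem_inter_iff, Set.mem_diff, Set.mem_singleton_iff]
        constructor
        · rintro ⟨h1, h2, h3⟩
          have : u ∈ ({v, zf y'} : Set V) := by rw [← hNy' y' hy'D]; exact ⟨h1, h2⟩
          rcases this with h' | h'
          · exact h'
          · exact absurd (Set.mem_singleton_iff.mp h') h3
        · rintro rfl
          exact ⟨(memN u y').mpr (Or.inr (hadjY y' hy'D.1).symm), hxR', hxr⟩
    · exact Set.Nonempty.mono (s19_priv_anti Set.diff_subset ⟨hvR', hvr⟩)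
        (hallpriv v hvR' hvx)
  · -- redVerts G R' = {x}
    ext v
    simp only [redVerts, Set.mem_setOf_eq, Set.mem_singleton_iff]
    constructor
    · rintro ⟨h1, h2⟩
      by_contra hvx
      obtain ⟨p, hp⟩ := hallpriv v h1 hvx
      rw [h2] at hp
      exact hp
    · rintro rfl
      exact ⟨hxR', hxpriv'⟩
  · -- R' ∩ N(x) = Y
    ext u
    simp only [Set.mem_inter_iff, SimpleGraph.mem_neighborSet]
    constructor
    · rintro ⟨h1, h2⟩
      rcases (hmemR' u).mp h1 with rfl | hu | hu | hu
      · exact absurd h2 G.irrefl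
      · exact hu
      · exact absurd (adjN h2) (hSNx u (hS''S hu))
      · obtain ⟨y'', hy''D, rfl⟩ := hZmem u hu
        exact absurd (adjN h2) (hzNx y'' hy''D.1)
    · intro hu
      exact ⟨hYR' hu, hYnbr u hu⟩
end
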